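/- Let X₁,…,X_m, Y₂,…,Y_m be random variables taking values in [0,1], with X₁ = Y₁, such that for every subfamily F of {X₁,…,X_m,Y₂,…,Y_m} of size between 2 and 2m−1, |E[∏_{Z∈F} Z] − ∏_{Z∈F} E[Z]| ≤ δ, and suppose X₁² = X₁ almost surely (X₁ is {0,1}-valued), and all variables have the same mean p ∈ (0,1). Then Cov(X₁⋯X_m, Y₁⋯Y_m) ≥ p(1−p)·p^{2m−2} − C_m·δ, for a constant C_m depending only on m. -/
import Mathlib


open MeasureTheory

/-- If two products `X₁⋯X_m` and `Y₁⋯Y_m` of `[0,1]`-valued variables share exactly the factor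
`X₁ = Y₁` (which is `{0,1}`-valued), all variables have mean `p ∈ (0,1)`, and all subfamilies of
size between `2` and `2m−1` of `{X₁,…,X_m,Y₂,…,Y_m}` are `δ`-approximately independent, then
`Cov(X₁⋯X_m, Y₁⋯Y_m) ≥ p(1−p)·p^{2m−2} − C_m·δ` for a constant `C_m` depending only on `m`. -/
theorem stmt16 (m : ℕ) (hm : 0 < m) :
    ∃ C : ℝ, ∀ (Ω : Type) (_ : MeasurableSpace Ω) (μ : Measure Ω),
      IsProbabilityMeasure μ →
      ∀ (X Y : Fin m → Ω → ℝ) (p δ : ℝ),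
      (∀ i, Measurable (X i)) → (∀ i, Measurable (Y i)) →
      (∀ i ω, X i ω ∈ Set.Icc (0:ℝ) 1) → (∀ i ω, Y i ω ∈ Set.Icc (0:ℝ) 1) →
      X ⟨0, hm⟩ = Y ⟨0, hm⟩ →
      (∀ᵐ ω ∂μ, X ⟨0, hm⟩ ω * X ⟨0, hm⟩ ω = X ⟨0, hm⟩ ω) →
      0 < p → p < 1 →
      (∀ i, ∫ ω, X i ω ∂μ = p) → (∀ i, ∫ ω, Y i ω ∂μ = p) →
      (∀ F : Finset (Fin m ⊕ Fin m), Sum.inr ⟨0, hm⟩ ∉ F →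
        2 ≤ F.card → F.card ≤ 2 * m - 1 →
        |(∫ ω, ∏ z ∈ F, Sum.elim (fun i => X i ω) (fun i => Y i ω) z ∂μ) -
            ∏ z ∈ F, ∫ ω, Sum.elim (fun i => X i ω) (fun i => Y i ω) z ∂μ| ≤ δ) →
      (∫ ω, (∏ i, X i ω) * (∏ i, Y i ω) ∂μ) -
          (∫ ω, ∏ i, X i ω ∂μ) * (∫ ω, ∏ i, Y i ω ∂μ) ≥
        p * (1 - p) * p ^ (2 * m - 2) - C * δ := by
  refine ⟨if m = 1 then 0 else 3, ?_⟩
  intro Ω _ μ hμ X Y p δ hXm hYm hX01 hY01 hXY hX0sq hp0 hp1 hEX hEY hF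
  rcases eq_or_ne m 1 with h1 | h1
  · subst h1
    have h00 : (⟨0, hm⟩ : Fin 1) = 0 := rfl
    rw [h00] at hXY hX0sq
    have e1 : ∫ ω, (∏ i, X i ω) * (∏ i, Y i ω) ∂μ = p := by
      have hae : ∀ᵐ ω ∂μ, (∏ i : Fin 1, X i ω) * (∏ i : Fin 1, Y i ω) = X 0 ω := by
        filter_upwards [hX0sq] with ω h
        simp only [Fin.prod_univ_one, ← hXY]
        exact h
      rw [integral_congr_ae hae, hEX 0]
    have e2 : ∫ ω, (∏ i : Fin 1, X i ω) ∂μ = p := by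
      simp only [Fin.prod_univ_one]; exact hEX 0
    have e3 : ∫ ω, (∏ i : Fin 1, Y i ω) ∂μ = p := by
      simp only [Fin.prod_univ_one]; exact hEY 0
    rw [e1, e2, e3, if_pos rfl]
    norm_num
    nlinarith [hp0, hp1]
  · have hm2 : 2 ≤ m := by omega
    rw [if_neg h1]
    set i0 : Fin m := ⟨0, hm⟩ with hi0
    set Z : Fin m ⊕ Fin m → Ω → ℝ :=
      fun z ω => Sum.elim (fun i => X i ω) (fun i => Y i ω) z with hZdef
    have hZm : ∀ z, Measurable (Z z) := by rintro (i | i); exacts [hXm i, hYm i]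
    have hZ01 : ∀ z ω, Z z ω ∈ Set.Icc (0:ℝ) 1 := by
      rintro (i | i) ω; exacts [hX01 i ω, hY01 i ω]
    have hEZ : ∀ z, ∫ ω, Z z ω ∂μ = p := by rintro (i | i); exacts [hEX i, hEY i]
    have hF' : ∀ F : Finset (Fin m ⊕ Fin m), Sum.inr i0 ∉ F → 2 ≤ F.card →
        F.card ≤ 2 * m - 1 →
        |(∫ ω, ∏ z ∈ F, Z z ω ∂μ) - ∏ z ∈ F, ∫ ω, Z z ω ∂μ| ≤ δ := hF
    have hPmeas : ∀ F : Finset (Fin m ⊕ Fin m), Measurable (fun ω => ∏ z ∈ F, Z z ω) :=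
      fun F => Finset.measurable_prod F (fun z _ => hZm z)
    have hP01 : ∀ (F : Finset (Fin m ⊕ Fin m)) ω, (∏ z ∈ F, Z z ω) ∈ Set.Icc (0:ℝ) 1 := by
      intro F ω
      exact ⟨Finset.prod_nonneg fun z _ => (hZ01 z ω).1,
        Finset.prod_le_one (fun z _ => (hZ01 z ω).1) (fun z _ => (hZ01 z ω).2)⟩
    have hPint : ∀ F : Finset (Fin m ⊕ Fin m), Integrable (fun ω => ∏ z ∈ F, Z z ω) μ := by
      intro F
      refine (integrable_const (1:ℝ)).mono' (hPmeas F).aestronglyMeasurable ?_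
      filter_upwards with ω
      rw [Real.norm_eq_abs, abs_of_nonneg (hP01 F ω).1]
      exact (hP01 F ω).2
    have hPnn : ∀ F : Finset (Fin m ⊕ Fin m), 0 ≤ ∫ ω, ∏ z ∈ F, Z z ω ∂μ :=
      fun F => integral_nonneg fun ω => (hP01 F ω).1
    have hPle1 : ∀ F : Finset (Fin m ⊕ Fin m), (∫ ω, ∏ z ∈ F, Z z ω ∂μ) ≤ 1 := by
      intro F
      calc ∫ ω, ∏ z ∈ F, Z z ω ∂μ ≤ ∫ _, (1:ℝ) ∂μ :=
            integral_mono (hPint F) (integrable_const 1) (fun ω => (hP01 F ω).2)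
        _ = 1 := by simp
    have hprodE : ∀ F : Finset (Fin m ⊕ Fin m),
        (∏ z ∈ F, ∫ ω, Z z ω ∂μ) = p ^ F.card := by
      intro F
      rw [Finset.prod_congr rfl fun z _ => hEZ z, Finset.prod_const]
    set F0 : Finset (Fin m ⊕ Fin m) := Finset.univ.erase (Sum.inr i0) with hF0
    set FA : Finset (Fin m ⊕ Fin m) := Finset.univ.image Sum.inl with hFA
    set FB : Finset (Fin m ⊕ Fin m) :=
      insert (Sum.inl i0) ((Finset.univ.erase i0).image Sum.inr) with hFB
    have hcard_univ : (Finset.univ : Finset (Fin m ⊕ Fin m)).card = 2 * m := by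
      simp [Fintype.card_sum]; omega
    have hF0card : F0.card = 2 * m - 1 := by
      rw [hF0, Finset.card_erase_of_mem (Finset.mem_univ _), hcard_univ]
    have hFAcard : FA.card = m := by
      rw [hFA, Finset.card_image_of_injective _ Sum.inl_injective]; simp
    have hi0inl_not : Sum.inl i0 ∉ (Finset.univ.erase i0).image Sum.inr := by simp
    have hFBcard : FB.card = m := by
      rw [hFB, Finset.card_insert_of_notMem hi0inl_not,
        Finset.card_image_of_injective _ Sum.inr_injective,
        Finset.card_erase_of_mem (Finset.mem_univ _)]
      simp
      omega
    have h0F0 : Sum.inr i0 ∉ F0 := Finset.notMem_erase _ _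
    have h0FA : Sum.inr i0 ∉ FA := by simp [hFA]
    have h0FB : Sum.inr i0 ∉ FB := by simp [hFB]
    -- the three integral estimates
    have hbA : |(∫ ω, ∏ z ∈ FA, Z z ω ∂μ) - p ^ m| ≤ δ := by
      have h := hF' FA h0FA (by rw [hFAcard]; omega) (by rw [hFAcard]; omega)
      rwa [hprodE, hFAcard] at h
    have hbB : |(∫ ω, ∏ z ∈ FB, Z z ω ∂μ) - p ^ m| ≤ δ := by
      have h := hF' FB h0FB (by rw [hFBcard]; omega) (by rw [hFBcard]; omega)
      rwa [hprodE, hFBcard] at h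
    have hbC : |(∫ ω, ∏ z ∈ F0, Z z ω ∂μ) - p ^ (2 * m - 1)| ≤ δ := by
      have h := hF' F0 h0F0 (by rw [hF0card]; omega) (by rw [hF0card])
      rwa [hprodE, hF0card] at h
    -- identify the three integrals in the goal
    have hAeq : (∫ ω, ∏ i, X i ω ∂μ) = ∫ ω, ∏ z ∈ FA, Z z ω ∂μ := by
      refine integral_congr_ae (Filter.Eventually.of_forall fun ω => ?_)
      show (∏ i, X i ω) = ∏ z ∈ FA, Z z ω
      rw [hFA, Finset.prod_image (fun a _ b _ h => Sum.inl_injective h)]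
      simp only [hZdef, Sum.elim_inl]
    have hBeq : (∫ ω, ∏ i, Y i ω ∂μ) = ∫ ω, ∏ z ∈ FB, Z z ω ∂μ := by
      refine integral_congr_ae (Filter.Eventually.of_forall fun ω => ?_)
      show (∏ i, Y i ω) = ∏ z ∈ FB, Z z ω
      rw [hFB, Finset.prod_insert hi0inl_not,
        Finset.prod_image (fun a _ b _ h => Sum.inr_injective h),
        ← Finset.mul_prod_erase Finset.univ _ (Finset.mem_univ i0)]
      simp only [hZdef, Sum.elim_inl, Sum.elim_inr, hXY]
    have hCeq : (∫ ω, (∏ i, X i ω) * (∏ i, Y i ω) ∂μ) = ∫ ω, ∏ z ∈ F0, Z z ω ∂μ := by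
      refine integral_congr_ae ?_
      filter_upwards [hX0sq] with ω hsq
      have hmem : Sum.inl i0 ∈ F0 := by simp [hF0]
      have h1 : (∏ i, X i ω) * (∏ i, Y i ω) = ∏ z : Fin m ⊕ Fin m, Z z ω := by
        rw [Fintype.prod_sum_type]
        simp only [hZdef, Sum.elim_inl, Sum.elim_inr]
      rw [h1, ← Finset.mul_prod_erase Finset.univ _ (Finset.mem_univ (Sum.inr i0)),
        ← hF0, ← Finset.mul_prod_erase F0 _ hmem]
      simp only [hZdef, Sum.elim_inl, Sum.elim_inr, ← hXY]
      rw [← mul_assoc, hsq]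
    rw [hCeq, hAeq, hBeq]
    set a := ∫ ω, ∏ z ∈ FA, Z z ω ∂μ with ha
    set b := ∫ ω, ∏ z ∈ FB, Z z ω ∂μ with hb
    set c := ∫ ω, ∏ z ∈ F0, Z z ω ∂μ with hc
    have ha01 : 0 ≤ a ∧ a ≤ 1 := ⟨hPnn FA, hPle1 FA⟩
    have hs01 : 0 ≤ p ^ m ∧ p ^ m ≤ 1 :=
      ⟨pow_nonneg hp0.le m, pow_le_one₀ hp0.le hp1.le⟩
    have hδ : 0 ≤ δ := le_trans (abs_nonneg _) hbA
    have e1 : a * (b - p ^ m) ≤ δ := by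
      calc a * (b - p ^ m) ≤ |a * (b - p ^ m)| := le_abs_self _
        _ = |a| * |b - p ^ m| := abs_mul _ _
        _ ≤ 1 * δ :=
          mul_le_mul (abs_le.mpr ⟨by linarith [ha01.1], ha01.2⟩) hbB (abs_nonneg _) zero_le_one
        _ = δ := one_mul δ
    have e2 : p ^ m * (a - p ^ m) ≤ δ := by
      calc p ^ m * (a - p ^ m) ≤ |p ^ m * (a - p ^ m)| := le_abs_self _
        _ = |p ^ m| * |a - p ^ m| := abs_mul _ _
        _ ≤ 1 * δ :=
          mul_le_mul (abs_le.mpr ⟨by linarith [hs01.1], hs01.2⟩) hbA (abs_nonneg _) zero_le_one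
        _ = δ := one_mul δ
    have habs3 := (abs_le.mp hbC).1
    have hpow1 : p ^ (2 * m - 1) = p ^ (2 * m - 2) * p := by
      rw [← pow_succ]; congr 1; omega
    have hpow2 : p ^ m * p ^ m = p ^ (2 * m - 2) * p * p := by
      rw [← pow_add, ← pow_succ, ← pow_succ]; congr 1; omega
    nlinarith [e1, e2, habs3, hpow1, hpow2]
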